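/- Let M > 1, n ≥ 1 a natural number, v ≥ 0 with (n−1)·M·v ≤ (M−1)·n, and let α* ∈ [1/M, 1) be a root of the cubic h(α) = (M−1)Mnα³ − (M+1)(M−2)nα² − (4n+(M−1)(n−1)v)α + 2n. Then there exists a unique real number β* in the open interval (α*/M, (M+1)/(2M)) such that q(β*) = 0, where q is the quadratic in β with coefficients depending on (M, n, v, α*) given by q(β) = Mn((M−1)²n + (M+1)²(n−1)v)((M−1)α* + (M+1))β² + 2M[2(M−1)Mn((n−1)v − n)(α*)² + (M+1)((n−1)v − n)((3−M)n + (M−1)(n−1)v)α* + n(n − (M−4)Mn − (M+1)(M+3)(n−1)v)]β + [−2M(M²−1)n((n−1)v − n)(α*)² + (2(2+M+2M²−M³)n² + (M−3)(M+1)²(n−1)nv − (M−1)(M+1)²(n−1)²v²)α* + 2(M+1)²n((n−1)v − n)]. -/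

import Mathlib

/-- The cubic `h(α)` from the two-step stochastic stepsize schedule analysis. -/
noncomputable def hcub (M n v α : ℝ) : ℝ :=
  (M - 1) * M * n * α ^ 3 - (M + 1) * (M - 2) * n * α ^ 2
    - (4 * n + (M - 1) * (n - 1) * v) * α + 2 * n

/-- The quadratic `q(β)` (in `β`, with parameters `M, n, v, α`) from the
two-step stochastic stepsize schedule analysis. -/
noncomputable def qquad (M n v α β : ℝ) : ℝ :=
  M * n * ((M - 1) ^ 2 * n + (M + 1) ^ 2 * (n - 1) * v) * ((M - 1) * α + (M + 1)) * β ^ 2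
  + 2 * M * (2 * (M - 1) * M * n * ((n - 1) * v - n) * α ^ 2
      + (M + 1) * ((n - 1) * v - n) * ((3 - M) * n + (M - 1) * (n - 1) * v) * α
      + n * (n - (M - 4) * M * n - (M + 1) * (M + 3) * (n - 1) * v)) * β
  + (-2 * M * (M ^ 2 - 1) * n * ((n - 1) * v - n) * α ^ 2
      + (2 * (2 + M + 2 * M ^ 2 - M ^ 3) * n ^ 2 + (M - 3) * (M + 1) ^ 2 * (n - 1) * n * v
          - (M - 1) * (M + 1) ^ 2 * (n - 1) ^ 2 * v ^ 2) * α
      + 2 * (M + 1) ^ 2 * n * ((n - 1) * v - n))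

/-!
The quadratic `q` has nonnegative leading coefficient, is negative at `α / M` and positive at
`(M + 1) / (2 M)`; such a quadratic has exactly one root in between, since two roots above `α / M`
would make `q (α / M) ≥ 0`.

At `(M + 1) / (2 M)` the value of `q` is `((M - 1) / (2 M))²` times its leading coefficient.
At `α / M` the root equation, which reads `n (1 - α) (2 - 2α - M (M - 1) α²) = (M - 1) (n - 1) v α`,
eliminates `(n - 1) v`: then `M⁶ (M - 1) q (α / M) = -n² α (1 - α) K (M - 1, M α - 1)` for an explicit
polynomial `K = qLeftPoly` in the slack variables `m = M - 1 > 0` and `c = M α - 1 ≥ 0`. Since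
`v ≥ 0`, the root equation also gives `2 - 2α - M (M - 1) α² ≥ 0`, and under that constraint
`K > 0`.
-/

open Set

theorem existsUnique_quadratic_root_mem_Ioo {a b c L R : ℝ} (ha : 0 ≤ a) (hLR : L < R)
    (hL : a * L ^ 2 + b * L + c < 0) (hR : 0 < a * R ^ 2 + b * R + c) :
    ∃! x, x ∈ Ioo L R ∧ a * x ^ 2 + b * x + c = 0 := by
  have hcont : ContinuousOn (fun x => a * x ^ 2 + b * x + c) (Icc L R) := by fun_prop
  obtain ⟨x, hx, hx0⟩ := intermediate_value_Ioo hLR.le hcont ⟨hL, hR⟩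
  refine ⟨x, ⟨hx, hx0⟩, fun y ⟨hy, hy0⟩ => ?_⟩
  by_contra hne
  have hsum : a * (y + x) + b = 0 :=
    mul_left_cancel₀ (sub_ne_zero.2 hne) (by linear_combination hy0 - hx0)
  have hfac : a * L ^ 2 + b * L + c = a * ((L - x) * (L - y)) := by
    linear_combination hx0 + (L - x) * hsum
  have : 0 ≤ a * ((L - x) * (L - y)) :=
    mul_nonneg ha (mul_nonneg_of_nonpos_of_nonpos (by linarith [hx.1]) (by linarith [hy.1]))
  linarith

section

variable {M n v α : ℝ}

noncomputable def qquadLead (M n v α : ℝ) : ℝ :=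
  M * n * ((M - 1) ^ 2 * n + (M + 1) ^ 2 * (n - 1) * v) * ((M - 1) * α + (M + 1))

theorem qquadLead_pos (hM : 1 < M) (hn : 0 < n) (hw : 0 ≤ (n - 1) * v) (hα : 0 ≤ α) :
    0 < qquadLead M n v α := by
  have hM1 : 0 < M - 1 := by linarith
  have hvar : 0 < (M - 1) ^ 2 * n + (M + 1) ^ 2 * (n - 1) * v := by
    rw [mul_assoc ((M + 1) ^ 2)]; positivity
  unfold qquadLead
  have : 0 < (M - 1) * α + (M + 1) := by positivity
  positivity

theorem qquad_right_eq (hM : M ≠ 0) :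
    qquad M n v α ((M + 1) / (2 * M)) = ((M - 1) / (2 * M)) ^ 2 * qquadLead M n v α := by
  unfold qquad qquadLead
  field_simp
  ring

theorem nonneg_of_hcub_eq_zero (hM : 1 ≤ M) (hn : 0 < n) (hw : 0 ≤ (n - 1) * v) (hα0 : 0 ≤ α)
    (hα1 : α < 1) (hroot : hcub M n v α = 0) : 0 ≤ 2 - 2 * α - M * (M - 1) * α ^ 2 := by
  have hfac : n * (1 - α) * (2 - 2 * α - M * (M - 1) * α ^ 2) = (M - 1) * ((n - 1) * v) * α := by
    unfold hcub at hroot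
    linear_combination hroot
  have hrhs : 0 ≤ (M - 1) * ((n - 1) * v) * α := by
    have : 0 ≤ M - 1 := by linarith
    positivity
  have hn1 : 0 < n * (1 - α) := mul_pos hn (by linarith)
  exact nonneg_of_mul_nonneg_right (hfac ▸ hrhs) hn1

noncomputable def qLeftPoly (m c : ℝ) : ℝ :=
  (2 * m ^ 10 + 23 * m ^ 9 + 115 * m ^ 8 + 323 * m ^ 7 + 557 * m ^ 6 + 604 * m ^ 5 + 402 * m ^ 4
      + 150 * m ^ 3 + 24 * m ^ 2)
  + c * (3 * m ^ 10 + 27 * m ^ 9 + 87 * m ^ 8 + 83 * m ^ 7 - 198 * m ^ 6 - 700 * m ^ 5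
      - 944 * m ^ 4 - 678 * m ^ 3 - 256 * m ^ 2 - 40 * m)
  + c ^ 2 * (m ^ 10 + 5 * m ^ 9 - 13 * m ^ 8 - 133 * m ^ 7 - 346 * m ^ 6 - 392 * m ^ 5
      - 102 * m ^ 4 + 220 * m ^ 3 + 248 * m ^ 2 + 104 * m + 16)
  + c ^ 3 * (-m ^ 9 - 11 * m ^ 8 - 35 * m ^ 7 - 27 * m ^ 6 + 74 * m ^ 5 + 194 * m ^ 4
      + 190 * m ^ 3 + 88 * m ^ 2 + 16 * m)
  + c ^ 4 * (2 * m ^ 7 + 12 * m ^ 6 + 28 * m ^ 5 + 32 * m ^ 4 + 18 * m ^ 3 + 4 * m ^ 2)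

theorem qLeftPoly_pos {m c : ℝ} (hm : 0 < m) (hc : 0 ≤ c)
    (hp : 0 ≤ m - 2 * c - 2 * m * c - m * c ^ 2) : 0 < qLeftPoly m c := by
  -- Certificate: with `p` the polynomial in `hp`, `qLeftPoly m c - p * S` has nonnegative
  -- coefficients.
  set S := m ^ 8 * c ^ 2 + 10 * m ^ 7 * c + 57 * m ^ 6 * c + 27 * m ^ 5 * c + 178 * m ^ 5
    + 338 * m ^ 4 + 190 * m ^ 3 + 149 * m ^ 2 + 20 * m with hS
  have hR : 0 < qLeftPoly m c - (m - 2 * c - 2 * m * c - m * c ^ 2) * S := by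
    rw [hS, qLeftPoly]; ring_nf; positivity
  nlinarith [mul_nonneg hp (show 0 ≤ S by positivity)]

theorem qquad_left_eq (hM : M ≠ 0) (hroot : hcub M n v α = 0) :
    M ^ 6 * (M - 1) * qquad M n v α (α / M)
      = -(n ^ 2 * α * (1 - α) * qLeftPoly (M - 1) (M * α - 1)) := by
  unfold qquad qLeftPoly
  unfold hcub at hroot
  field_simp
  linear_combination M ^ 5 * (M * (M - 1) * (M + 1) * (M + 1 - 2 * α) * ((n - 1) * v)
    + n * ((-2 * M ^ 4 + 2 * M ^ 2) * α ^ 3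
      + (M ^ 5 + 3 * M ^ 4 - 6 * M ^ 3 - 4 * M ^ 2 - 3 * M + 1) * α ^ 2
      + (-M ^ 5 + M ^ 4 + 6 * M ^ 3 + 4 * M ^ 2 - M - 1) * α
      - M ^ 4 - M ^ 3 + M ^ 2 + M)) * hroot

theorem qquad_left_neg (hM : 1 < M) (hn : 0 < n) (hw : 0 ≤ (n - 1) * v) (hMα : 1 ≤ M * α)
    (hα : α < 1) (hroot : hcub M n v α = 0) : qquad M n v α (α / M) < 0 := by
  have hM0 : 0 < M := by linarith
  have hM1 : 0 < M - 1 := by linarith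
  have hα0 : 0 < α := by nlinarith
  have hQ := nonneg_of_hcub_eq_zero hM.le hn hw hα0.le hα hroot
  have hK : 0 < qLeftPoly (M - 1) (M * α - 1) := by
    refine qLeftPoly_pos (by linarith) (by linarith) ?_
    have : (M - 1) - 2 * (M * α - 1) - 2 * (M - 1) * (M * α - 1) - (M - 1) * (M * α - 1) ^ 2
        = M * (2 - 2 * α - M * (M - 1) * α ^ 2) := by ring
    rw [this]
    positivity
  have hneg : M ^ 6 * (M - 1) * qquad M n v α (α / M) < 0 := by
    rw [qquad_left_eq hM0.ne' hroot, neg_lt_zero]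
    have : 0 < 1 - α := by linarith
    positivity
  exact neg_of_mul_neg_right hneg (by positivity)

end

theorem stmt_1 (M : ℝ) (n : ℕ) (v : ℝ)
    (hM : 1 < M) (hn : 1 ≤ n) (hv : 0 ≤ v)
    (α : ℝ) (hα : α ∈ Set.Ico (1 / M) 1) (hroot : hcub M (n : ℝ) v α = 0) :
    ∃! β : ℝ, β ∈ Set.Ioo (α / M) ((M + 1) / (2 * M)) ∧ qquad M (n : ℝ) v α β = 0 := by
  obtain ⟨hα1, hα2⟩ := hα
  have hM0 : 0 < M := by linarith
  have hn0 : (0 : ℝ) < n := by exact_mod_cast hn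
  have hw : 0 ≤ ((n : ℝ) - 1) * v := mul_nonneg (sub_nonneg.2 (by exact_mod_cast hn)) hv
  have hMα : 1 ≤ M * α := by rwa [div_le_iff₀ hM0, mul_comm] at hα1
  have hα0 : 0 ≤ α := by nlinarith
  have hLR : α / M < (M + 1) / (2 * M) := by
    rw [div_lt_div_iff₀ hM0 (by positivity)]
    nlinarith
  have hR : 0 < qquad M n v α ((M + 1) / (2 * M)) := by
    rw [qquad_right_eq hM0.ne']
    have : 0 < M - 1 := by linarith
    have := qquadLead_pos hM hn0 hw hα0
    positivity
  exact existsUnique_quadratic_root_mem_Ioo (qquadLead_pos hM hn0 hw hα0).le hLR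
    (qquad_left_neg hM hn0 hw hMα hα2 hroot) hR
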